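/- arXiv:2301.08726 — 2 statements merged into one kernel-verified Lean document; each statement's English description precedes it below -/
import Mathlib

section
/- Let x be a solution of (VM-DIN-AVD) and set U(0) = (ε(0)/2)‖ẋ0‖² + f(x0) − f(x*). Then for all t ≥ 0, ε(t)‖ẋ(t)‖ ≤ √(2U(0)) · √(ε(t)). -/
open Real Filter MeasureTheory Set

noncomputable def hessApp {n : ℕ} (f : EuclideanSpace ℝ (Fin n) → ℝ)
    (x v : EuclideanSpace ℝ (Fin n)) : EuclideanSpace ℝ (Fin n) :=
  fderiv ℝ (gradient f) x v

def StandingF {n : ℕ} (f : EuclideanSpace ℝ (Fin n) → ℝ) : Prop :=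
  ConvexOn ℝ Set.univ f ∧ ContDiff ℝ 2 f ∧
    Filter.Tendsto f (Filter.cocompact _) Filter.atTop ∧
    ∀ s : Set (EuclideanSpace ℝ (Fin n)), Bornology.IsBounded s →
      ∃ μ > 0, StrongConvexOn s μ f

def AdmissibleEps (ε : ℝ → ℝ) : Prop :=
  AntitoneOn ε (Set.Ici 0) ∧ (∀ t ∈ Set.Ici (0:ℝ), 0 < ε t) ∧
    Differentiable ℝ ε ∧ Differentiable ℝ (deriv ε) ∧
    ∃ M, ∀ t ∈ Set.Ici (0:ℝ), |deriv (deriv ε) t| ≤ M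

def AdmissibleAlpha (α : ℝ → ℝ) : Prop :=
  AntitoneOn α (Set.Ici 0) ∧ (∀ t ∈ Set.Ici (0:ℝ), 0 ≤ α t) ∧ Differentiable ℝ α

def IsSolVM {n : ℕ} (f : EuclideanSpace ℝ (Fin n) → ℝ) (β : ℝ) (ε α : ℝ → ℝ)
    (x : ℝ → EuclideanSpace ℝ (Fin n)) (x0 v0 : EuclideanSpace ℝ (Fin n)) : Prop :=
  ContDiff ℝ 2 x ∧ x 0 = x0 ∧ deriv x 0 = v0 ∧
    ∀ t ∈ Set.Ici (0:ℝ),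
      ε t • deriv (deriv x) t + α t • deriv x t
        + β • hessApp f (x t) (deriv x t) + gradient f (x t) = 0

def IsSolCN {n : ℕ} (f : EuclideanSpace ℝ (Fin n) → ℝ) (β : ℝ)
    (x : ℝ → EuclideanSpace ℝ (Fin n)) (x0 : EuclideanSpace ℝ (Fin n)) : Prop :=
  ContDiff ℝ 1 x ∧ x 0 = x0 ∧
    ∀ t ∈ Set.Ici (0:ℝ), β • hessApp f (x t) (deriv x t) + gradient f (x t) = 0

def IsSolLM {n : ℕ} (f : EuclideanSpace ℝ (Fin n) → ℝ) (β : ℝ) (α : ℝ → ℝ)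
    (x : ℝ → EuclideanSpace ℝ (Fin n)) (x0 : EuclideanSpace ℝ (Fin n)) : Prop :=
  ContDiff ℝ 1 x ∧ x 0 = x0 ∧
    ∀ t ∈ Set.Ici (0:ℝ),
      α t • deriv x t + β • hessApp f (x t) (deriv x t) + gradient f (x t) = 0

/-!
The energy `E(t) = ε(t)/2 ‖ẋ(t)‖² + f(x(t))` is non-increasing along a trajectory: pairing the
equation with `ẋ` gives `E' = (ε'/2 - α) ‖ẋ‖² - β ⟪∇²f(x) ẋ, ẋ⟫ ≤ 0`, because `ε` is
non-increasing, `α ≥ 0` and the Hessian of a convex function is positive semidefinite.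
Hence `ε(t) ‖ẋ(t)‖² ≤ 2 (E(0) - f(x*)) = 2 U(0)`; multiplying by `ε(t)` and taking square roots
gives the bound.
-/

theorem mul_le_sqrt_mul_sqrt_of_mul_sq_le {e a c : ℝ} (he : 0 ≤ e) (ha : 0 ≤ a)
    (h : e * a ^ 2 ≤ c) : e * a ≤ √c * √e := by
  rw [← Real.sqrt_mul' c he, ← Real.sqrt_sq (mul_nonneg he ha)]
  exact Real.sqrt_le_sqrt (by nlinarith [mul_le_mul_of_nonneg_left h he])

section InnerProductSpace

open scoped RealInnerProductSpace

variable {F : Type*} [NormedAddCommGroup F] [InnerProductSpace ℝ F] [CompleteSpace F]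

theorem ContDiff.differentiable_gradient {f : F → ℝ} (hf : ContDiff ℝ 2 f) :
    Differentiable ℝ (gradient f) :=
  (InnerProductSpace.toDual ℝ F).symm.toContinuousLinearEquiv.differentiable.comp
    ((hf.fderiv_right (m := 1) (by norm_num)).differentiable (by norm_num))

theorem DifferentiableAt.hasDerivAt_comp_inner_gradient {f : F → ℝ} {c : ℝ → F} {c' : F}
    {s : ℝ} (hf : DifferentiableAt ℝ f (c s)) (hc : HasDerivAt c c' s) :
    HasDerivAt (fun r => f (c r)) (⟪gradient f (c s), c'⟫) s := by
  rw [inner_gradient_left]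
  exact hf.hasFDerivAt.comp_hasDerivAt s hc

theorem ConvexOn.inner_fderiv_gradient_self_nonneg {f : F → ℝ} (hconv : ConvexOn ℝ univ f)
    (hf : ContDiff ℝ 2 f) (p v : F) :
    0 ≤ ⟪fderiv ℝ (gradient f) p v, v⟫ := by
  set c : ℝ →ᵃ[ℝ] F := AffineMap.lineMap p (p + v)
  have hc : ∀ s, HasDerivAt c v s := fun s => by
    simpa [c] using AffineMap.hasDerivAt_lineMap (a := p) (b := p + v) (x := s)
  have hline : ∀ s, HasDerivAt (fun r => f (c r)) (⟪gradient f (c s), v⟫) s :=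
    fun s => (hf.differentiable (by norm_num) _).hasDerivAt_comp_inner_gradient (hc s)
  -- the slope of `f` along the line is monotone, and its derivative at `0` is the Hessian form
  have hmono : Monotone fun s => ⟪gradient f (c s), v⟫ := by
    have := (hconv.comp_affineMap c).monotoneOn_deriv fun s _ => (hline s).differentiableAt
    intro a b hab
    simpa only [Function.comp_def, (hline _).deriv] using this (mem_univ a) (mem_univ b) hab
  have hgrad : HasDerivAt (fun s => gradient f (c s)) (fderiv ℝ (gradient f) p v) 0 := by
    simpa [c, Function.comp_def] using
      (hf.differentiable_gradient (c 0)).hasFDerivAt.comp_hasDerivAt 0 (hc 0)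
  simpa using (hgrad.inner ℝ (hasDerivAt_const 0 v)).nonneg_of_monotone hmono

noncomputable def vmEnergy (f : F → ℝ) (ε : ℝ → ℝ) (x : ℝ → F) (t : ℝ) : ℝ :=
  ε t / 2 * ‖deriv x t‖ ^ 2 + f (x t)

theorem hasDerivAt_vmEnergy {f : F → ℝ} {ε : ℝ → ℝ} {x : ℝ → F} {t : ℝ}
    (hε : DifferentiableAt ℝ ε t) (hx : DifferentiableAt ℝ x t)
    (hx' : DifferentiableAt ℝ (deriv x) t) (hf : DifferentiableAt ℝ f (x t)) :
    HasDerivAt (vmEnergy f ε x)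
      (deriv ε t / 2 * ‖deriv x t‖ ^ 2 + ε t * ⟪deriv x t, deriv (deriv x) t⟫
        + ⟪gradient f (x t), deriv x t⟫) t := by
  have := ((hε.hasDerivAt.div_const 2).mul hx'.hasDerivAt.norm_sq).add
    (hf.hasDerivAt_comp_inner_gradient hx.hasDerivAt)
  exact this.congr_deriv (by ring)

end InnerProductSpace

open scoped RealInnerProductSpace in
theorem IsSolVM.antitoneOn_vmEnergy {n : ℕ} {f : EuclideanSpace ℝ (Fin n) → ℝ} {β : ℝ}
    {ε α : ℝ → ℝ} {x : ℝ → EuclideanSpace ℝ (Fin n)} {x0 v0 : EuclideanSpace ℝ (Fin n)}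
    (hsol : IsSolVM f β ε α x x0 v0) (hβ : 0 ≤ β) (hconv : ConvexOn ℝ univ f)
    (hf : ContDiff ℝ 2 f) (hε : AntitoneOn ε (Ici 0)) (hεd : Differentiable ℝ ε)
    (hα : ∀ t ∈ Ici (0 : ℝ), 0 ≤ α t) :
    AntitoneOn (vmEnergy f ε x) (Ici 0) := by
  obtain ⟨hx, -, -, hode⟩ := hsol
  have hE t := hasDerivAt_vmEnergy (hεd t) (hx.differentiable (by norm_num) t)
    (hx.differentiable_deriv_two t) (hf.differentiable (by norm_num) (x t))
  have hEd : Differentiable ℝ (vmEnergy f ε x) := fun t => (hE t).differentiableAt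
  refine antitoneOn_of_deriv_nonpos (convex_Ici 0) hEd.continuous.continuousOn
    hEd.differentiableOn fun t ht => ?_
  rw [interior_Ici] at ht
  replace ht : t ∈ Ici (0 : ℝ) := mem_Ici.2 (le_of_lt ht)
  have hε' : deriv ε t ≤ 0 := by
    rw [← (hεd t).derivWithin (uniqueDiffOn_Ici 0 t ht)]
    exact hε.derivWithin_nonpos
  have hhess : 0 ≤ ⟪deriv x t, hessApp f (x t) (deriv x t)⟫ := by
    rw [real_inner_comm]
    exact hconv.inner_fderiv_gradient_self_nonneg hf (x t) (deriv x t)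
  have hpair := congrArg (⟪deriv x t, ·⟫) (hode t ht)
  simp only [inner_add_right, real_inner_smul_right, inner_zero_right,
    real_inner_self_eq_norm_sq] at hpair
  rw [(hE t).deriv, real_inner_comm (deriv x t) (gradient f (x t))]
  linarith [mul_nonneg (hα t ht) (sq_nonneg ‖deriv x t‖), mul_nonneg hβ hhess,
    mul_nonpos_of_nonpos_of_nonneg hε' (sq_nonneg ‖deriv x t‖)]

theorem stmt3 {n : ℕ} (f : EuclideanSpace ℝ (Fin n) → ℝ) (β : ℝ) (hβ : 0 < β)
    (hf : StandingF f) (ε α : ℝ → ℝ) (hε : AdmissibleEps ε) (hα : AdmissibleAlpha α)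
    (x0 v0 : EuclideanSpace ℝ (Fin n)) (x : ℝ → EuclideanSpace ℝ (Fin n))
    (hsol : IsSolVM f β ε α x x0 v0)
    (xstar : EuclideanSpace ℝ (Fin n)) (hmin : ∀ z, f xstar ≤ f z)
    (U0 : ℝ) (hU0 : U0 = ε 0 / 2 * ‖v0‖ ^ 2 + f x0 - f xstar) :
    ∀ t ∈ Set.Ici (0:ℝ),
      ε t * ‖deriv x t‖ ≤ Real.sqrt (2 * U0) * Real.sqrt (ε t) := by
  intro t ht
  obtain ⟨hconv, hf, -⟩ := hf
  obtain ⟨hε, hεpos, hεd, -⟩ := hε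
  have hdecay : vmEnergy f ε x t ≤ vmEnergy f ε x 0 :=
    hsol.antitoneOn_vmEnergy hβ.le hconv hf hε hεd hα.2.1 self_mem_Ici ht ht
  obtain ⟨-, hx0, hv0, -⟩ := hsol
  rw [vmEnergy, vmEnergy, hx0, hv0] at hdecay
  refine mul_le_sqrt_mul_sqrt_of_mul_sq_le (hεpos t ht).le (norm_nonneg _) ?_
  linarith [hmin (x t)]
end

section
/- Let x be a solution of (VM-DIN-AVD). Then for all t ≥ 0 the gradient along the trajectory admits the integral representation β∇f(x(t)) = β e^{−t/β} ∇f(x0) + e^{−t/β} ε(0) ẋ0 − ε(t)ẋ(t) + e^{−t/β} ∫₀ᵗ e^{s/β} ( ε(s)/β + ε'(s) − α(s) ) ẋ(s) ds. -/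
open Real Filter MeasureTheory Set

/-! Along a solution, `F = β ∇f(x) + ε ẋ` satisfies the linear equation
`F' = -F / β + (ε / β + ε' - α) ẋ`: indeed `F' = β ∇²f(x) ẋ + ε ẍ + ε' ẋ`, and the equation
(VM-DIN-AVD) replaces `β ∇²f(x) ẋ + ε ẍ` by `-∇f(x) - α ẋ = -(F - ε ẋ) / β - α ẋ`.
Multiplying by the integrating factor `e^{s/β}` and integrating over `[0, t]` gives the formula. -/

theorem ContDiff.gradient {E : Type*} [NormedAddCommGroup E] [InnerProductSpace ℝ E]
    [CompleteSpace E] {f : E → ℝ} {k : WithTop ℕ∞} (hf : ContDiff ℝ (k + 1) f) :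
    ContDiff ℝ k (gradient f) :=
  (InnerProductSpace.toDual ℝ E).symm.contDiff.comp (hf.fderiv_right le_rfl)

theorem integral_exp_mul_smul_eq_of_hasDerivAt {E : Type*} [NormedAddCommGroup E]
    [NormedSpace ℝ E] [CompleteSpace E] {F u : ℝ → E} {c a b : ℝ}
    (hF : ∀ s ∈ uIcc a b, HasDerivAt F (u s - c • F s) s) (hu : ContinuousOn u (uIcc a b)) :
    ∫ s in a..b, exp (c * s) • u s = exp (c * b) • F b - exp (c * a) • F a := by
  refine intervalIntegral.integral_eq_sub_of_hasDerivAt (f := fun s => exp (c * s) • F s)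
    (fun s hs => ?_) ?_
  · have hexp : HasDerivAt (fun s => exp (c * s)) (exp (c * s) * c) s := by
      simpa using ((hasDerivAt_id s).const_mul c).exp
    refine (hexp.smul (hF s hs)).congr_deriv ?_
    rw [smul_sub, smul_smul, sub_add_cancel]
  · exact ((continuous_exp.comp (continuous_const_mul c)).continuousOn.smul hu).intervalIntegrable

theorem IsSolVM.hasDerivAt_smul_gradient_add_smul_deriv {n : ℕ}
    {f : EuclideanSpace ℝ (Fin n) → ℝ} {β : ℝ} {ε α : ℝ → ℝ}
    {x : ℝ → EuclideanSpace ℝ (Fin n)} {x0 v0 : EuclideanSpace ℝ (Fin n)}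
    (hsol : IsSolVM f β ε α x x0 v0) (hβ : β ≠ 0) (hf : ContDiff ℝ 2 f)
    (hε : Differentiable ℝ ε) {s : ℝ} (hs : 0 ≤ s) :
    HasDerivAt (fun s => β • gradient f (x s) + ε s • deriv x s)
      ((ε s / β + deriv ε s - α s) • deriv x s
        - β⁻¹ • (β • gradient f (x s) + ε s • deriv x s)) s := by
  obtain ⟨hx, -, -, hode⟩ := hsol
  have hx' := (contDiff_succ_iff_deriv (n := 1)).mp hx
  have hgrad : HasDerivAt (fun s => gradient f (x s)) (hessApp f (x s) (deriv x s)) s :=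
    ((hf.gradient (k := 1)).differentiable one_ne_zero _).hasFDerivAt.comp_hasDerivAt s
      (hx'.1 s).hasDerivAt
  have hvel : HasDerivAt (deriv x) (deriv (deriv x) s) s :=
    (hx'.2.2.differentiable one_ne_zero s).hasDerivAt
  refine ((hgrad.const_smul β).add ((hε s).hasDerivAt.smul hvel)).congr_deriv ?_
  have hacc : gradient f (x s) = -(ε s • deriv (deriv x) s + α s • deriv x s
      + β • hessApp f (x s) (deriv x s)) := eq_neg_of_add_eq_zero_right (hode s hs)
  rw [hacc]
  match_scalars <;> field_simp
  ring

theorem stmt6 {n : ℕ} (f : EuclideanSpace ℝ (Fin n) → ℝ) (β : ℝ) (hβ : 0 < β)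
    (hf : StandingF f) (ε α : ℝ → ℝ) (hε : AdmissibleEps ε) (hα : AdmissibleAlpha α)
    (x0 v0 : EuclideanSpace ℝ (Fin n)) (x : ℝ → EuclideanSpace ℝ (Fin n))
    (hsol : IsSolVM f β ε α x x0 v0) :
    ∀ t ∈ Set.Ici (0:ℝ),
      β • gradient f (x t)
        = (β * Real.exp (-t / β)) • gradient f x0
          + (Real.exp (-t / β) * ε 0) • v0
          - ε t • deriv x t
          + Real.exp (-t / β) •
              ∫ s in (0:ℝ)..t,
                (Real.exp (s / β) * (ε s / β + deriv ε s - α s)) • deriv x s := by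
  intro t ht
  have hvel : Continuous (deriv x) :=
    ((contDiff_succ_iff_deriv (n := 1)).mp hsol.1).2.2.continuous
  have hcoef : Continuous fun s => ε s / β + deriv ε s - α s :=
    ((hε.2.2.1.continuous.div_const β).add hε.2.2.2.1.continuous).sub hα.2.2.continuous
  have key := integral_exp_mul_smul_eq_of_hasDerivAt (c := β⁻¹) (a := 0) (b := t)
    (fun s hs => hsol.hasDerivAt_smul_gradient_add_smul_deriv hβ.ne' hf.2.1 hε.2.2.1
      (by rw [uIcc_of_le ht] at hs; exact hs.1))
    (hcoef.smul hvel).continuousOn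
  simp only [smul_smul, ← div_eq_inv_mul, mul_zero, exp_zero, one_smul, hsol.2.1,
    hsol.2.2.1] at key
  rw [key, neg_div, exp_neg]
  match_scalars <;> field_simp <;> ring
end
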